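/- arXiv:2106.07244 — 2 statements merged into one kernel-verified Lean document; each statement's English description precedes it below -/
import Mathlib

section
/- Let S_n^A be a sum of independent Bernoulli random variables with parameters 1/k for k = 1,…,n. Then P[S_n^A = k] = A(n,k)/n! for all k ∈ {0,1,…,n}, where A(n,k) are the unsigned Stirling numbers of the first kind. -/
/-!
Almost surely every `X i` is `0` or `1`, so `∑ i, X i = k` means that the random set
`{i | X i = 1}` has `k` elements. By independence it equals a given `s` with probability
`∏ i ∉ s, i / n!` (the index `i : Fin n` carries the parameter `1 / (i + 1)`), and summing over
the `k`-subsets `s` gives the coefficient of `t ^ k` in `∏ i < n, (t + i) = t (t + 1) ⋯ (t + n - 1)`,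
which satisfies the recurrence defining `A(n, k)`.
-/

open MeasureTheory ProbabilityTheory
open scoped ENNReal

/-- Unsigned Stirling numbers of the first kind. -/
def stirlingA : ℕ → ℕ → ℕ
  | 0, 0 => 1
  | 0, _ + 1 => 0
  | _ + 1, 0 => 0
  | n + 1, k + 1 => stirlingA n k + n * stirlingA n (k + 1)

open scoped Nat
open Finset Polynomial

theorem Finset.coeff_prod_X_add_C {ι R : Type*} [CommSemiring R] [DecidableEq ι]
    (s : Finset ι) (r : ι → R) (k : ℕ) :
    (∏ i ∈ s, (X + C (r i))).coeff k = ∑ t ∈ s.powersetCard k, ∏ i ∈ s \ t, r i := by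
  rw [prod_add, finsetSum_coeff, powersetCard_eq_filter, sum_filter]
  refine sum_congr rfl fun t _ => ?_
  rw [prod_const, ← map_prod, mul_comm, coeff_C_mul_X_pow]
  exact if_congr eq_comm rfl rfl

theorem stirlingA_eq_coeff_prod_X_add_C (n k : ℕ) :
    stirlingA n k = (∏ i : Fin n, (X + C (i : ℕ))).coeff k := by
  induction n generalizing k with
  | zero => cases k <;> simp [stirlingA, coeff_one]
  | succ n ih =>
    rw [Fin.prod_univ_castSucc, mul_add]
    simp only [Fin.val_castSucc, Fin.val_last]
    cases k with
    | zero => rw [coeff_add, coeff_mul_X_zero, coeff_mul_C, ← ih]; cases n <;> simp [stirlingA]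
    | succ k => rw [coeff_add, coeff_mul_X, coeff_mul_C, ← ih, ← ih, stirlingA, mul_comm]

theorem stirlingA_eq_sum_prod_compl (n k : ℕ) :
    stirlingA n k = ∑ s ∈ powersetCard k (univ : Finset (Fin n)), ∏ i ∈ sᶜ, (i : ℕ) := by
  rw [stirlingA_eq_coeff_prod_X_add_C, coeff_prod_X_add_C]
  simp only [← compl_eq_univ_sdiff]

theorem Finset.sum_eq_card_filter_eq_one {ι : Type*} (s : Finset ι) (f : ι → ℕ)
    (hf : ∀ i ∈ s, f i = 0 ∨ f i = 1) : ∑ i ∈ s, f i = #{i ∈ s | f i = 1} := by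
  rw [card_filter]
  exact sum_congr rfl fun i hi => by rcases hf i hi with h | h <;> simp [h]

theorem ENNReal.one_sub_one_div_natCast_add_one (m : ℕ) :
    1 - 1 / ((m : ℝ≥0∞) + 1) = m / (m + 1) := by
  have hm : (m : ℝ≥0∞) + 1 ≠ 0 := by positivity
  calc 1 - 1 / ((m : ℝ≥0∞) + 1) = (m + 1) / (m + 1) - 1 / (m + 1) := by
        rw [ENNReal.div_self hm (by simp)]
    _ = m / (m + 1) := by
        rw [← ENNReal.sub_div fun _ _ => hm, ENNReal.add_sub_cancel_right ENNReal.one_ne_top]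

theorem prod_ite_one_div_natCast_add_one (n : ℕ) (s : Finset (Fin n)) :
    ∏ i : Fin n, (if i ∈ s then 1 / ((i : ℕ) + 1 : ℝ≥0∞) else 1 - 1 / ((i : ℕ) + 1)) =
      (∏ i ∈ sᶜ, (i : ℕ) : ℕ) / n ! := by
  have hfac (i : Fin n) : (if i ∈ s then 1 / ((i : ℕ) + 1 : ℝ≥0∞) else 1 - 1 / ((i : ℕ) + 1)) =
      (if i ∈ sᶜ then ((i : ℕ) : ℝ≥0∞) else 1) / ((i : ℕ) + 1) := by
    by_cases hi : i ∈ s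
    · simp [hi]
    · rw [if_neg hi, if_pos (mem_compl.2 hi), ENNReal.one_sub_one_div_natCast_add_one]
  rw [prod_congr rfl fun i _ => hfac i, ENNReal.prod_div_distrib_of_ne_top (by simp),
    Fintype.prod_ite_mem, Fin.prod_univ_eq_prod_range (fun i => (i : ℝ≥0∞) + 1),
    ← prod_range_add_one_eq_factorial]
  push_cast
  rfl

theorem Set.setOf_filter_eq_eq_iInter {ι Ω β : Type*} [Fintype ι] [DecidableEq β]
    (X : ι → Ω → β) (b : β) (s : Finset ι) :
    {ω | ({i | X i ω = b} : Finset ι) = s} = ⋂ i, X i ⁻¹' {x | x = b ↔ i ∈ s} := by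
  ext ω
  simp [Finset.ext_iff]

theorem measurableSet_setOf_eq_iff {β : Type*} [MeasurableSpace β] [MeasurableSingletonClass β]
    (b : β) (p : Prop) : MeasurableSet {x | x = b ↔ p} := by
  by_cases hp : p <;> simp only [hp, iff_true, iff_false]
  · exact measurableSet_eq
  · exact measurableSet_eq.compl

theorem MeasureTheory.ae_eq_zero_or_eq_one_of_measure_eq_one_sub {Ω : Type*}
    [MeasurableSpace Ω] {μ : Measure Ω} [IsProbabilityMeasure μ] {Y : Ω → ℕ} (hY : Measurable Y)
    (h : μ {ω | Y ω = 0} = 1 - μ {ω | Y ω = 1}) : ∀ᵐ ω ∂μ, Y ω = 0 ∨ Y ω = 1 := by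
  have hdiff : {ω | ¬(Y ω = 0 ∨ Y ω = 1)} = {ω | Y ω = 1}ᶜ \ {ω | Y ω = 0} := by
    ext ω
    simp [and_comm]
  have hsub : {ω | Y ω = 0} ⊆ {ω | Y ω = 1}ᶜ := fun ω (h0 : Y ω = 0) => by simp [h0]
  rw [ae_iff, hdiff, measure_sdiff hsub
      (hY (measurableSet_singleton 0)).nullMeasurableSet (measure_ne_top _ _),
    prob_compl_eq_one_sub (s := {ω | Y ω = 1}) (hY (measurableSet_singleton 1)), h, tsub_self]

namespace ProbabilityTheory

variable {ι Ω β : Type*} [Fintype ι] [DecidableEq ι] [MeasurableSpace Ω] [MeasurableSpace β]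
  [MeasurableSingletonClass β] [DecidableEq β] {μ : Measure Ω} {X : ι → Ω → β}

theorem iIndepFun.measure_filter_eq_eq (hind : iIndepFun X μ) (b : β) (s : Finset ι) :
    μ {ω | ({i | X i ω = b} : Finset ι) = s} =
      ∏ i, if i ∈ s then μ {ω | X i ω = b} else μ {ω | X i ω ≠ b} := by
  rw [Set.setOf_filter_eq_eq_iInter,
    hind.meas_iInter fun i => ⟨_, measurableSet_setOf_eq_iff b (i ∈ s), rfl⟩]
  refine prod_congr rfl fun i _ => ?_
  split_ifs with hi <;> simp [hi, Set.preimage]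

theorem iIndepFun.measure_card_filter_eq (hX : ∀ i, Measurable (X i)) (hind : iIndepFun X μ)
    (b : β) (k : ℕ) :
    μ {ω | #{i | X i ω = b} = k} = ∑ s ∈ powersetCard k univ,
      ∏ i, if i ∈ s then μ {ω | X i ω = b} else μ {ω | X i ω ≠ b} := by
  have hfib : {ω | #{i | X i ω = b} = k} =
      ⋃ s ∈ powersetCard k univ, {ω | ({i | X i ω = b} : Finset ι) = s} := by
    ext ω
    simp
  rw [hfib, measure_biUnion_finset]
  · exact sum_congr rfl fun s _ => hind.measure_filter_eq_eq b s
  · exact fun s _ t _ hst => Set.disjoint_left.2 fun ω hs ht => hst (hs.symm.trans ht)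
  · intro s _
    rw [Set.setOf_filter_eq_eq_iInter]
    exact .iInter fun i => hX i (measurableSet_setOf_eq_iff b (i ∈ s))

end ProbabilityTheory

theorem stmt_4_general (n : ℕ)
    {Ω : Type*} [MeasurableSpace Ω] (μ : Measure Ω) [IsProbabilityMeasure μ]
    (X : Fin n → Ω → ℕ) (hmeas : ∀ i, Measurable (X i))
    (hind : iIndepFun X μ)
    (hX1 : ∀ i : Fin n, μ {ω | X i ω = 1} = 1 / ((i : ℕ) + 1 : ℝ≥0∞))
    (hX0 : ∀ i : Fin n, μ {ω | X i ω = 0} = 1 - 1 / ((i : ℕ) + 1 : ℝ≥0∞))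
    (k : ℕ) :
    μ {ω | ∑ i, X i ω = k} = (stirlingA n k : ℝ≥0∞) / (n.factorial : ℝ≥0∞) := by
  have hX_ne_one (i : Fin n) : μ {ω | X i ω ≠ 1} = 1 - 1 / ((i : ℕ) + 1 : ℝ≥0∞) := by
    rw [← hX1]
    exact prob_compl_eq_one_sub (hmeas i (measurableSet_singleton 1))
  have h01 : ∀ᵐ ω ∂μ, ∀ i, X i ω = 0 ∨ X i ω = 1 :=
    ae_all_iff.2 fun i => ae_eq_zero_or_eq_one_of_measure_eq_one_sub (hmeas i) (by rw [hX0, hX1])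
  have hcount : {ω | ∑ i, X i ω = k} =ᵐ[μ] {ω | #{i | X i ω = 1} = k} := by
    filter_upwards [h01] with ω hω
    show (∑ i, X i ω = k) = (#{i | X i ω = 1} = k)
    rw [sum_eq_card_filter_eq_one _ _ fun i _ => hω i]
  rw [measure_congr hcount, hind.measure_card_filter_eq hmeas 1 k]
  simp only [hX1, hX_ne_one, prod_ite_one_div_natCast_add_one]
  simp only [div_eq_mul_inv, ← sum_mul]
  rw [← Nat.cast_sum, ← stirlingA_eq_sum_prod_compl]

/-- If `S_n^A = X_1 + ⋯ + X_n` is a sum of independent Bernoulli random variables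
with `P[X_i = 1] = 1/i` (so `X_i ∈ {0,1}` a.s.), then `P[S_n^A = k] = A(n,k)/n!`
for all `0 ≤ k ≤ n`. -/
theorem stmt_4 (n : ℕ) (hn : 1 ≤ n)
    {Ω : Type*} [MeasurableSpace Ω] (μ : Measure Ω) [IsProbabilityMeasure μ]
    (X : Fin n → Ω → ℕ) (hmeas : ∀ i, Measurable (X i))
    (hind : iIndepFun X μ)
    (hX1 : ∀ i : Fin n, μ {ω | X i ω = 1} = 1 / ((i : ℕ) + 1 : ℝ≥0∞))
    (hX0 : ∀ i : Fin n, μ {ω | X i ω = 0} = 1 - 1 / ((i : ℕ) + 1 : ℝ≥0∞))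
    (k : ℕ) (hk : k ≤ n) :
    μ {ω | ∑ i, X i ω = k} = (stirlingA n k : ℝ≥0∞) / (n.factorial : ℝ≥0∞) :=
  stmt_4_general n μ X hmeas hind hX1 hX0 k
end

section
/- For fixed n, the function d ↦ D^A(n,d) := 2·Σ_{ℓ odd, ℓ≥1} A(n,n−d+ℓ) is nondecreasing in d ∈ {1,…,n}, and D^A(n,d) ≤ n! for all such d. -/
/-- `D^A(n,d) = 2·[A(n,n−d+1) + A(n,n−d+3) + ⋯]`, the sum ranging over odd
positive `ℓ` (note `A(n,m) = 0` for `m > n`, so odd `ℓ ≤ d` suffice). -/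
def DA (n d : ℕ) : ℕ :=
  2 * ∑ ℓ ∈ (Finset.Icc 1 d).filter (fun ℓ => Odd ℓ), stirlingA n (n - d + ℓ)

/-- Tail sum over an arithmetic progression of step 2. -/
def Tsum (n m : ℕ) : ℕ := ∑ j ∈ Finset.range (n+1), stirlingA n (m + 2*j)

lemma stirlingA_eq_zero : ∀ n k, n < k → stirlingA n k = 0
  | 0, _+1, _ => rfl
  | n+1, k+1, h => by
      have h1 : stirlingA n k = 0 := stirlingA_eq_zero n k (by omega)
      have h2 : stirlingA n (k+1) = 0 := stirlingA_eq_zero n (k+1) (by omega)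
      show stirlingA n k + n * stirlingA n (k + 1) = 0
      simp [h1, h2]

lemma stirlingA_zero : ∀ n, stirlingA (n+1) 0 = 0 := fun _ => rfl

lemma Tsum_succ (n m : ℕ) : Tsum (n+1) (m+1) = Tsum n m + n * Tsum n (m+1) := by
  unfold Tsum
  have hterm : ∀ j, stirlingA (n+1) (m+1+2*j)
      = stirlingA n (m+2*j) + n * stirlingA n ((m+1)+2*j) := by
    intro j
    have h : m+1+2*j = (m+2*j)+1 := by ring
    rw [h]
    rfl
  rw [Finset.sum_range_succ]
  have htop : stirlingA (n+1) (m+1+2*(n+1)) = 0 := stirlingA_eq_zero _ _ (by omega)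
  rw [htop, add_zero]
  rw [Finset.sum_congr rfl (fun j _ => hterm j), Finset.sum_add_distrib]
  try rw [← Finset.mul_sum]

lemma Tsum_zero_rec (n : ℕ) (hn : 1 ≤ n) : Tsum (n+1) 0 = Tsum n 1 + n * Tsum n 0 := by
  unfold Tsum
  have hsh : ∑ j ∈ Finset.range (n+1), stirlingA n ((1+2*j)+1)
      = ∑ j ∈ Finset.range (n+1), stirlingA n (0+2*j) := by
    rw [Finset.sum_range_succ, Finset.sum_range_succ']
    have e1 : stirlingA n ((1+2*n)+1) = 0 := stirlingA_eq_zero _ _ (by omega)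
    have e2 : stirlingA n (0+2*0) = 0 := by
      obtain ⟨n', rfl⟩ : ∃ n', n = n'+1 := ⟨n-1, by omega⟩
      exact stirlingA_zero n'
    rw [e1, e2, add_zero, add_zero]
    apply Finset.sum_congr rfl
    intro j _
    congr 1
    omega
  have hterm : ∀ j, stirlingA (n+1) (0+2*(j+1))
      = stirlingA n (1+2*j) + n * stirlingA n ((1+2*j)+1) := by
    intro j
    have h : 0+2*(j+1) = (1+2*j)+1 := by ring
    rw [h]
    show stirlingA n (1+2*j) + n * stirlingA n ((1+2*j)+1) = _
    rfl
  rw [Finset.sum_range_succ']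
  have h0 : stirlingA (n+1) (0+2*0) = 0 := stirlingA_zero n
  rw [h0, add_zero]
  rw [Finset.sum_congr rfl (fun j _ => hterm j), Finset.sum_add_distrib,
    ← Finset.mul_sum, hsh]

lemma Tsum_one (n : ℕ) : Tsum (n+1) 1 = Tsum n 0 + n * Tsum n 1 := by
  have := Tsum_succ n 0
  simpa using this

/-- Joint parity identity and monotonicity. -/
lemma key : ∀ n, (2 ≤ n → Tsum n 0 = Tsum n 1) ∧ (∀ m, Tsum n (m+2) ≤ Tsum n (m+1)) := by
  intro n
  induction n with
  | zero =>
    refine ⟨by omega, fun m => ?_⟩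
    have h : Tsum 0 (m+2) = 0 := by
      show ∑ j ∈ Finset.range 1, stirlingA 0 (m+2+2*j) = 0
      rw [Finset.sum_range_one]
      exact stirlingA_eq_zero 0 (m+2+2*0) (by omega)
    simp [h]
  | succ n ih =>
    match n, ih with
    | 0, _ =>
      refine ⟨by omega, fun m => ?_⟩
      have h : Tsum 1 (m+2) = 0 := by
        apply Finset.sum_eq_zero
        intro j _
        exact stirlingA_eq_zero 1 _ (by omega)
      simp [h]
    | 1, _ =>
      constructor
      · intro _
        decide
      · intro m
        match m with
        | 0 => decide
        | m+1 =>
          have h : Tsum 2 (m+3) = 0 := by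
            apply Finset.sum_eq_zero
            intro j _
            exact stirlingA_eq_zero 2 _ (by omega)
          simp [h]
    | (k+2), ih =>
      obtain ⟨hpar, hmono⟩ := ih
      have hpar' := hpar (by omega)
      constructor
      · intro _
        calc Tsum (k+2+1) 0 = Tsum (k+2) 1 + (k+2) * Tsum (k+2) 0 :=
              Tsum_zero_rec (k+2) (by omega)
          _ = Tsum (k+2) 0 + (k+2) * Tsum (k+2) 1 := by rw [hpar']
          _ = Tsum (k+2+1) 1 := (Tsum_one (k+2)).symm
      · intro m
        have h1 : Tsum (k+2) (m+1) ≤ Tsum (k+2) m := by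
          match m with
          | 0 => exact le_of_eq hpar'.symm
          | m+1 => exact hmono m
        have h2 : Tsum (k+2) (m+2) ≤ Tsum (k+2) (m+1) := hmono m
        calc Tsum (k+2+1) (m+2) = Tsum (k+2) (m+1) + (k+2) * Tsum (k+2) (m+1+1) :=
              Tsum_succ (k+2) (m+1)
          _ ≤ Tsum (k+2) m + (k+2) * Tsum (k+2) (m+1) :=
              Nat.add_le_add h1 (Nat.mul_le_mul_left _ h2)
          _ = Tsum (k+2+1) (m+1) := (Tsum_succ (k+2) m).symm

lemma Tsum_anti (n a b : ℕ) (ha : 1 ≤ a) (hab : a ≤ b) : Tsum n b ≤ Tsum n a := by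
  induction b, hab using Nat.le_induction with
  | base => exact le_refl _
  | succ b hb ihb =>
    refine le_trans ?_ ihb
    obtain ⟨c, rfl⟩ : ∃ c, b = c + 1 := ⟨b - 1, by omega⟩
    exact (key n).2 c

lemma sum_stirlingA : ∀ n, ∑ k ∈ Finset.range (n+1), stirlingA n k = n.factorial := by
  intro n
  induction n with
  | zero => decide
  | succ n ih =>
    match n, ih with
    | 0, _ => decide
    | (k+1), ih =>
      rw [Finset.sum_range_succ']
      have h0 : stirlingA (k+1+1) 0 = 0 := stirlingA_zero (k+1)
      rw [h0, add_zero]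
      have hterm : ∀ j, stirlingA (k+1+1) (j+1) = stirlingA (k+1) j + (k+1) * stirlingA (k+1) (j+1) :=
        fun j => rfl
      rw [Finset.sum_congr rfl (fun j _ => hterm j), Finset.sum_add_distrib, ← Finset.mul_sum, ih]
      have hshift : ∑ j ∈ Finset.range (k+1+1), stirlingA (k+1) (j+1) = (k+1).factorial := by
        have h := Finset.sum_range_succ' (fun j => stirlingA (k+1) j) (k+1+1)
        rw [Finset.sum_range_succ, ih, stirlingA_eq_zero (k+1) (k+1+1) (by omega), add_zero] at h
        have h0' : stirlingA (k+1) 0 = 0 := stirlingA_zero k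
        rw [h0', add_zero] at h
        omega
      rw [hshift, Nat.factorial_succ (k+1)]
      ring

lemma pair_sum (f : ℕ → ℕ) : ∀ N, ∑ k ∈ Finset.range (2*N), f k
    = ∑ j ∈ Finset.range N, (f (2*j) + f (2*j+1)) := by
  intro N
  induction N with
  | zero => simp
  | succ N ih =>
    have h : 2*(N+1) = (2*N+1)+1 := by ring
    rw [h, Finset.sum_range_succ, Finset.sum_range_succ, ih, Finset.sum_range_succ, add_assoc]

lemma Tsum_total (n : ℕ) : Tsum n 0 + Tsum n 1 = n.factorial := by
  unfold Tsum
  rw [← Finset.sum_add_distrib]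
  have h : ∀ j, stirlingA n (0+2*j) + stirlingA n (1+2*j)
      = stirlingA n (2*j) + stirlingA n (2*j+1) := by
    intro j; congr 2 <;> omega
  rw [Finset.sum_congr rfl (fun j _ => h j), ← pair_sum (fun k => stirlingA n k)]
  rw [← sum_stirlingA n]
  symm
  apply Finset.sum_subset
  · apply Finset.range_subset_range.2; omega
  · intro x _ hx
    simp only [Finset.mem_range, not_lt] at hx
    exact stirlingA_eq_zero n x (by omega)

lemma DA_eq (n d : ℕ) (h1 : 1 ≤ d) (h2 : d ≤ n) : DA n d = 2 * Tsum n (n - d + 1) := by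
  unfold DA Tsum
  congr 1
  have step1 : ∑ ℓ ∈ (Finset.Icc 1 d).filter (fun ℓ => Odd ℓ), stirlingA n (n - d + ℓ)
      = ∑ j ∈ (Finset.range (n+1)).filter (fun j => 2*j+1 ≤ d), stirlingA n ((n-d+1) + 2*j) := by
    apply Finset.sum_nbij' (i := fun ℓ => ℓ / 2) (j := fun j => 2*j+1)
    · intro a ha
      simp only [Finset.mem_filter, Finset.mem_Icc] at ha ⊢
      obtain ⟨⟨ha1, ha2⟩, c, hc⟩ := ha
      constructor
      · simp only [Finset.mem_range]; omega
      · omega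
    · intro b hb
      simp only [Finset.mem_filter, Finset.mem_Icc, Finset.mem_range] at hb ⊢
      refine ⟨⟨by omega, by omega⟩, b, by omega⟩
    · intro a ha
      simp only [Finset.mem_filter, Finset.mem_Icc] at ha
      obtain ⟨_, c, hc⟩ := ha
      omega
    · intro b _
      omega
    · intro a ha
      simp only [Finset.mem_filter, Finset.mem_Icc] at ha
      obtain ⟨⟨ha1, ha2⟩, c, hc⟩ := ha
      congr 1
      omega
  rw [step1]
  rw [← Finset.sum_filter_add_sum_filter_not (Finset.range (n+1)) (fun j => 2*j+1 ≤ d)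
    (fun j => stirlingA n ((n-d+1) + 2*j))]
  have h : ∑ j ∈ (Finset.range (n+1)).filter (fun j => ¬ (2*j+1 ≤ d)),
      stirlingA n ((n-d+1) + 2*j) = 0 := by
    apply Finset.sum_eq_zero
    intro j hj
    simp only [Finset.mem_filter, Finset.mem_range, not_le] at hj
    exact stirlingA_eq_zero n _ (by omega)
  rw [h, add_zero]

/-- For fixed `n`, the function `d ↦ D^A(n,d)` is nondecreasing on `{1,…,n}`,
and (for `n ≥ 2`, where the parity identity holds) `D^A(n,d) ≤ n!` there. -/
theorem stmt_12 (n : ℕ) :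
    (∀ d d' : ℕ, 1 ≤ d → d ≤ d' → d' ≤ n → DA n d ≤ DA n d') ∧
    (2 ≤ n → ∀ d : ℕ, 1 ≤ d → d ≤ n → DA n d ≤ n.factorial) := by
  constructor
  · intro d d' hd hdd' hdn
    rw [DA_eq n d hd (le_trans hdd' hdn), DA_eq n d' (le_trans hd hdd') hdn]
    apply Nat.mul_le_mul_left
    exact Tsum_anti n (n - d' + 1) (n - d + 1) (by omega) (by omega)
  · intro hn d hd hdn
    rw [DA_eq n d hd hdn]
    have h1 : Tsum n (n - d + 1) ≤ Tsum n 1 := Tsum_anti n 1 (n - d + 1) (by omega) (by omega)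
    have h2 : 2 * Tsum n 1 = n.factorial := by
      have ht := Tsum_total n
      have hp := (key n).1 hn
      omega
    omega
end
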